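/- arXiv:0903.0908 — 2 statements merged into one kernel-verified Lean document; each statement's English description precedes it below -/
import Mathlib

section
/- Under the stated water-wave setup, the relative pseudo-volumetric mass flux is well defined: the map x ↦ ∫_{−d}^{η(x)} √(ρ(x,y)) · (u(x,y) − c) dy is constant on ℝ. -/
/-!
With `w = √ρ (u - c)` and `b = √ρ v`, incompressibility and conservation of mass make the
field `(w, b)` divergence free in the fluid domain, and the kinematic and bed conditions say
that it is tangent to the free surface and to the bed. Its Piola transform under the flattening
`(x, s) ↦ (x, -d + (η x + d) s)` is then a divergence-free field on the strip `ℝ × [0, 1]` with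
no flux through the two edges, so by the divergence theorem on rectangles its flux through the
segment `{x} × [0, 1]`, which is the integral in question, does not depend on `x`.
-/

open Set MeasureTheory

/-- Partial derivative in the first (horizontal) variable. -/
noncomputable def pdx (f : ℝ × ℝ → ℝ) (z : ℝ × ℝ) : ℝ := fderiv ℝ f z (1, 0)

/-- Partial derivative in the second (vertical) variable. -/
noncomputable def pdy (f : ℝ × ℝ → ℝ) (z : ℝ × ℝ) : ℝ := fderiv ℝ f z (0, 1)

theorem fderiv_apply_eq_pdx_add_pdy {f : ℝ × ℝ → ℝ} (z : ℝ × ℝ) (a b : ℝ) :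
    fderiv ℝ f z (a, b) = a * pdx f z + b * pdy f z := by
  have hab : ((a, b) : ℝ × ℝ) = a • ((1 : ℝ), (0 : ℝ)) + b • ((0 : ℝ), (1 : ℝ)) := by simp
  rw [hab, map_add, map_smul, map_smul, smul_eq_mul, smul_eq_mul, pdx, pdy]

theorem DifferentiableAt.hasDerivAt_comp_prodMk {f : ℝ × ℝ → ℝ} {φ ψ : ℝ → ℝ} {t φ' ψ' : ℝ}
    (hf : DifferentiableAt ℝ f (φ t, ψ t)) (hφ : HasDerivAt φ φ' t) (hψ : HasDerivAt ψ ψ' t) :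
    HasDerivAt (fun t => f (φ t, ψ t)) (φ' * pdx f (φ t, ψ t) + ψ' * pdy f (φ t, ψ t)) t := by
  rw [← fderiv_apply_eq_pdx_add_pdy]
  exact hf.hasFDerivAt.comp_hasDerivAt t (hφ.prodMk hψ)

theorem pdx_eq_of_hasDerivAt {f : ℝ × ℝ → ℝ} {x y a : ℝ} (hf : DifferentiableAt ℝ f (x, y))
    (h : HasDerivAt (fun t => f (t, y)) a x) : pdx f (x, y) = a := by
  simpa using (hf.hasDerivAt_comp_prodMk (hasDerivAt_id x) (hasDerivAt_const x y)).unique h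

theorem pdy_eq_of_hasDerivAt {f : ℝ × ℝ → ℝ} {x y a : ℝ} (hf : DifferentiableAt ℝ f (x, y))
    (h : HasDerivAt (fun t => f (x, t)) a y) : pdy f (x, y) = a := by
  simpa using (hf.hasDerivAt_comp_prodMk (hasDerivAt_const y x) (hasDerivAt_id y)).unique h

theorem integral_slice_strip_eq_of_pdx_add_pdy_eq_zero {A B : ℝ × ℝ → ℝ} {a b : ℝ} (hab : a ≤ b)
    (hA : ContinuousOn A (univ ×ˢ Icc a b)) (hB : ContinuousOn B (univ ×ˢ Icc a b))
    (hAd : ∀ p ∈ univ ×ˢ Ioo a b, DifferentiableAt ℝ A p)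
    (hBd : ∀ p ∈ univ ×ˢ Ioo a b, DifferentiableAt ℝ B p)
    (hdiv : ∀ p ∈ univ ×ˢ Ioo a b, pdx A p + pdy B p = 0)
    (hbot : ∀ x, B (x, a) = 0) (htop : ∀ x, B (x, b) = 0) (x₁ x₂ : ℝ) :
    ∫ s in a..b, A (x₁, s) = ∫ s in a..b, A (x₂, s) := by
  have hrect : uIcc x₁ x₂ ×ˢ uIcc a b ⊆ univ ×ˢ Icc a b := by
    rw [uIcc_of_le hab]
    exact prod_mono (subset_univ _) le_rfl
  have hopen : Ioo (min x₁ x₂) (max x₁ x₂) ×ˢ Ioo (min a b) (max a b) \ ∅ ⊆ univ ×ˢ Ioo a b := by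
    rw [sdiff_empty, min_eq_left hab, max_eq_right hab]
    exact prod_mono (subset_univ _) le_rfl
  have hint : IntegrableOn (fun p => pdx A p + pdy B p) (uIcc x₁ x₂ ×ˢ uIcc a b) := by
    rw [uIcc_of_le hab]
    have hzero : IntegrableOn (fun p => pdx A p + pdy B p) (uIcc x₁ x₂ ×ˢ Ioo a b) :=
      integrableOn_zero.congr_fun (fun p hp => (hdiv p ⟨trivial, hp.2⟩).symm)
        (measurableSet_uIcc.prod measurableSet_Ioo)
    exact hzero.congr_set_ae (Measure.set_prod_ae_eq (ae_eq_refl _) Ioo_ae_eq_Icc.symm)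
  have hslice : ∀ x, ∫ s in a..b, (pdx A (x, s) + pdy B (x, s)) = 0 := by
    intro x
    rw [intervalIntegral.integral_of_le hab, integral_Ioc_eq_integral_Ioo]
    exact setIntegral_eq_zero_of_forall_eq_zero fun s hs => hdiv _ ⟨trivial, hs⟩
  have hgreen : ∫ x in x₁..x₂, ∫ s in a..b, (pdx A (x, s) + pdy B (x, s)) =
      (((∫ x in x₁..x₂, B (x, b)) - ∫ x in x₁..x₂, B (x, a)) + ∫ s in a..b, A (x₂, s)) -
        ∫ s in a..b, A (x₁, s) :=
    integral2_divergence_prod_of_hasFDerivAt_off_countable A B (fderiv ℝ A) (fderiv ℝ B)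
      x₁ a x₂ b ∅ countable_empty (hA.mono hrect) (hB.mono hrect)
      (fun p hp => (hAd p (hopen hp)).hasFDerivAt) (fun p hp => (hBd p (hopen hp)).hasFDerivAt) hint
  simp only [hslice, hbot, htop, intervalIntegral.integral_zero] at hgreen
  linarith

def fluidDomain (η : ℝ → ℝ) (d : ℝ) : Set (ℝ × ℝ) := {z | -d < z.2 ∧ z.2 < η z.1}

def flatten (η : ℝ → ℝ) (d : ℝ) (p : ℝ × ℝ) : ℝ × ℝ := (p.1, -d + (η p.1 + d) * p.2)

def flattenedFluxX (η : ℝ → ℝ) (d : ℝ) (w : ℝ × ℝ → ℝ) (p : ℝ × ℝ) : ℝ :=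
  (η p.1 + d) * w (flatten η d p)

/-- Together with `flattenedFluxX`, the Piola transform of the field `(w, b)` under
`flatten η d`, which multiplies the divergence by the Jacobian `η x + d`. -/
noncomputable def flattenedFluxY (η : ℝ → ℝ) (d : ℝ) (w b : ℝ × ℝ → ℝ) (p : ℝ × ℝ) : ℝ :=
  b (flatten η d p) - p.2 * deriv η p.1 * w (flatten η d p)

section Flatten

variable {η : ℝ → ℝ} {d : ℝ} {w b : ℝ × ℝ → ℝ}

@[simp]
theorem flatten_zero (x : ℝ) : flatten η d (x, 0) = (x, -d) := by
  simp [flatten]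

@[simp]
theorem flatten_one (x : ℝ) : flatten η d (x, 1) = (x, η x) := by
  simp [flatten]

theorem continuous_flatten (hη : Continuous η) : Continuous (flatten η d) := by
  unfold flatten
  fun_prop

theorem isOpen_fluidDomain (hη : Continuous η) : IsOpen (fluidDomain η d) :=
  (isOpen_lt continuous_const continuous_snd).inter (isOpen_lt continuous_snd hη.fst')

theorem mapsTo_flatten (hη : ∀ x, -d < η x) :
    MapsTo (flatten η d) (univ ×ˢ Ioo 0 1) (fluidDomain η d) := by
  rintro ⟨x, s⟩ ⟨-, hs0, hs1⟩
  have hx := hη x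
  constructor <;> simp only [flatten] <;> nlinarith

theorem integral_flattenedFluxX (x : ℝ) :
    ∫ s in (0 : ℝ)..1, flattenedFluxX η d w (x, s) = ∫ y in (-d)..(η x), w (x, y) := by
  simp only [flattenedFluxX, flatten, intervalIntegral.integral_const_mul]
  rw [← smul_eq_mul, intervalIntegral.smul_integral_comp_add_mul (fun y => w (x, y))]
  simp

theorem differentiableAt_flattenedFluxX {p : ℝ × ℝ} (hη : DifferentiableAt ℝ η p.1)
    (hw : DifferentiableAt ℝ w (flatten η d p)) :
    DifferentiableAt ℝ (flattenedFluxX η d w) p := by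
  unfold flattenedFluxX flatten at *
  fun_prop

theorem differentiableAt_flattenedFluxY {p : ℝ × ℝ} (hη : DifferentiableAt ℝ η p.1)
    (hη' : DifferentiableAt ℝ (deriv η) p.1) (hw : DifferentiableAt ℝ w (flatten η d p))
    (hb : DifferentiableAt ℝ b (flatten η d p)) :
    DifferentiableAt ℝ (flattenedFluxY η d w b) p := by
  unfold flattenedFluxY flatten at *
  fun_prop

theorem continuousOn_flattenedFluxX {s : Set (ℝ × ℝ)} {t : Set (ℝ × ℝ)} (hη : Continuous η)
    (hw : ContinuousOn w t) (hst : MapsTo (flatten η d) s t) :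
    ContinuousOn (flattenedFluxX η d w) s :=
  ((hη.comp continuous_fst).add continuous_const).continuousOn.mul
    (hw.comp (continuous_flatten hη).continuousOn hst)

theorem continuousOn_flattenedFluxY {s : Set (ℝ × ℝ)} {t : Set (ℝ × ℝ)} (hη : Continuous η)
    (hη' : Continuous (deriv η)) (hw : ContinuousOn w t) (hb : ContinuousOn b t)
    (hst : MapsTo (flatten η d) s t) :
    ContinuousOn (flattenedFluxY η d w b) s :=
  (hb.comp (continuous_flatten hη).continuousOn hst).sub
    ((continuous_snd.mul (hη'.comp continuous_fst)).continuousOn.mul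
      (hw.comp (continuous_flatten hη).continuousOn hst))

theorem pdx_flattenedFluxX_add_pdy_flattenedFluxY {p : ℝ × ℝ} (hη : DifferentiableAt ℝ η p.1)
    (hη' : DifferentiableAt ℝ (deriv η) p.1) (hw : DifferentiableAt ℝ w (flatten η d p))
    (hb : DifferentiableAt ℝ b (flatten η d p)) :
    pdx (flattenedFluxX η d w) p + pdy (flattenedFluxY η d w b) p =
      (η p.1 + d) * (pdx w (flatten η d p) + pdy b (flatten η d p)) := by
  obtain ⟨x, s⟩ := p
  set q := flatten η d (x, s)
  have hη₁ : HasDerivAt (fun t => η t + d) (deriv η x) x := hη.hasDerivAt.add_const d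
  have hwx := hw.hasDerivAt_comp_prodMk (hasDerivAt_id x)
    ((hη₁.mul_const s).const_add (-d))
  have hws := hw.hasDerivAt_comp_prodMk (hasDerivAt_const s x)
    (((hasDerivAt_id s).const_mul (η x + d)).const_add (-d))
  have hbs := hb.hasDerivAt_comp_prodMk (hasDerivAt_const s x)
    (((hasDerivAt_id s).const_mul (η x + d)).const_add (-d))
  have hX : pdx (flattenedFluxX η d w) (x, s) =
      deriv η x * w q + (η x + d) * (pdx w q + deriv η x * s * pdy w q) := by
    refine pdx_eq_of_hasDerivAt (differentiableAt_flattenedFluxX hη hw) ?_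
    simpa [flattenedFluxX, flatten, q] using hη₁.fun_mul hwx
  have hY : pdy (flattenedFluxY η d w b) (x, s) =
      (η x + d) * pdy b q - (deriv η x * w q + s * deriv η x * ((η x + d) * pdy w q)) := by
    refine pdy_eq_of_hasDerivAt (differentiableAt_flattenedFluxY hη hη' hw hb) ?_
    simpa [flattenedFluxY, flatten, q] using
      hbs.fun_sub (((hasDerivAt_id s).mul_const _).fun_mul hws)
  rw [hX, hY]
  ring

theorem integral_slice_fluidDomain_eq_of_pdx_add_pdy_eq_zero (hη : ContDiff ℝ 2 η) (hηd : ∀ x, -d < η x)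
    (hwc : ContinuousOn w (closure (fluidDomain η d)))
    (hbc : ContinuousOn b (closure (fluidDomain η d)))
    (hwd : ∀ z ∈ fluidDomain η d, DifferentiableAt ℝ w z)
    (hbd : ∀ z ∈ fluidDomain η d, DifferentiableAt ℝ b z)
    (hdiv : ∀ z ∈ fluidDomain η d, pdx w z + pdy b z = 0)
    (hbot : ∀ x, b (x, -d) = 0) (htop : ∀ x, b (x, η x) = deriv η x * w (x, η x))
    (x₁ x₂ : ℝ) :
    ∫ y in (-d)..(η x₁), w (x₁, y) = ∫ y in (-d)..(η x₂), w (x₂, y) := by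
  have hη₁ : Differentiable ℝ η := hη.differentiable two_ne_zero
  have hη₂ : Differentiable ℝ (deriv η) :=
    (contDiff_succ_iff_deriv.mp hη).2.2.differentiable one_ne_zero
  have hinto := mapsTo_flatten hηd
  have hinto' : MapsTo (flatten η d) (univ ×ˢ Icc 0 1) (closure (fluidDomain η d)) := by
    simpa [closure_prod_eq] using hinto.closure (continuous_flatten hη₁.continuous)
  simp only [← integral_flattenedFluxX]
  refine integral_slice_strip_eq_of_pdx_add_pdy_eq_zero zero_le_one (B := flattenedFluxY η d w b)
    (continuousOn_flattenedFluxX hη₁.continuous hwc hinto')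
    (continuousOn_flattenedFluxY hη₁.continuous hη₂.continuous hwc hbc hinto')
    (fun p hp => differentiableAt_flattenedFluxX (hη₁ _) (hwd _ (hinto hp)))
    (fun p hp => differentiableAt_flattenedFluxY (hη₁ _) (hη₂ _) (hwd _ (hinto hp))
      (hbd _ (hinto hp)))
    (fun p hp => ?_) (fun x => ?_) (fun x => ?_) x₁ x₂
  · rw [pdx_flattenedFluxX_add_pdy_flattenedFluxY (hη₁ _) (hη₂ _) (hwd _ (hinto hp))
      (hbd _ (hinto hp)), hdiv _ (hinto hp), mul_zero]
  · simp [flattenedFluxY, hbot]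
  · simp [flattenedFluxY, htop]

end Flatten

theorem pdx_sqrt_mul_add_pdy_sqrt_mul {ρ u v : ℝ × ℝ → ℝ} {z : ℝ × ℝ} (c : ℝ) (hρ : 0 < ρ z)
    (hρd : DifferentiableAt ℝ ρ z) (hud : DifferentiableAt ℝ u z)
    (hvd : DifferentiableAt ℝ v z) :
    pdx (fun q => √(ρ q) * (u q - c)) z + pdy (fun q => √(ρ q) * v q) z =
      √(ρ z) * (pdx u z + pdy v z) + ((u z - c) * pdx ρ z + v z * pdy ρ z) / (2 * √(ρ z)) := by
  have hsqrt := hρd.hasFDerivAt.sqrt hρ.ne'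
  simp only [pdx, pdy]
  rw [(hsqrt.fun_mul (hud.hasFDerivAt.sub_const c)).fderiv, (hsqrt.fun_mul hvd.hasFDerivAt).fderiv]
  simp only [add_apply, smul_apply, smul_eq_mul]
  field_simp
  ring

theorem pseudo_mass_flux_well_defined_general
    (c d : ℝ)
    (η : ℝ → ℝ) (hηC3 : ContDiff ℝ 3 η)
    (hηbed : ∀ x, -d < η x)
    (D : Set (ℝ × ℝ)) (hDdef : D = {z : ℝ × ℝ | -d < z.2 ∧ z.2 < η z.1})
    (u v ρ : ℝ × ℝ → ℝ)
    (huC : ContDiffOn ℝ 2 u (closure D)) (hvC : ContDiffOn ℝ 2 v (closure D))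
    (hρC : ContDiffOn ℝ 2 ρ (closure D))
    (hρpos : ∀ z ∈ closure D, 0 < ρ z)
    (hincomp : ∀ z ∈ D, pdx u z + pdy v z = 0)
    (hmass : ∀ z ∈ D, (u z - c) * pdx ρ z + v z * pdy ρ z = 0)
    (hkin : ∀ x, v (x, η x) = (u (x, η x) - c) * deriv η x)
    (hbed : ∀ x, v (x, -d) = 0)
    :
    ∀ x₁ x₂ : ℝ,
      (∫ y in (-d)..(η x₁), Real.sqrt (ρ (x₁, y)) * (u (x₁, y) - c))
        = ∫ y in (-d)..(η x₂), Real.sqrt (ρ (x₂, y)) * (u (x₂, y) - c) := by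
  have hD : D = fluidDomain η d := hDdef
  subst hD
  have hdiff {f : ℝ × ℝ → ℝ} (hf : ContDiffOn ℝ 2 f (closure (fluidDomain η d)))
      (z : ℝ × ℝ) (hz : z ∈ fluidDomain η d) : DifferentiableAt ℝ f z :=
    (hf.contDiffAt (Filter.mem_of_superset
      ((isOpen_fluidDomain hηC3.continuous).mem_nhds hz) subset_closure)).differentiableAt
      two_ne_zero
  have hsqrt (z : ℝ × ℝ) (hz : z ∈ fluidDomain η d) : DifferentiableAt ℝ (fun q => √(ρ q)) z :=
    (hdiff hρC z hz).sqrt (hρpos z (subset_closure hz)).ne'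
  refine integral_slice_fluidDomain_eq_of_pdx_add_pdy_eq_zero (w := fun z => √(ρ z) * (u z - c))
    (b := fun z => √(ρ z) * v z) (hηC3.of_le (by norm_num)) hηbed
    (hρC.continuousOn.sqrt.mul (huC.continuousOn.sub continuousOn_const))
    (hρC.continuousOn.sqrt.mul hvC.continuousOn)
    (fun z hz => (hsqrt z hz).mul ((hdiff huC z hz).sub_const c))
    (fun z hz => (hsqrt z hz).mul (hdiff hvC z hz))
    (fun z hz => ?_) (fun x => by simp [hbed]) (fun x => by simp only [hkin]; ring)
  rw [pdx_sqrt_mul_add_pdy_sqrt_mul c (hρpos z (subset_closure hz)) (hdiff hρC z hz)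
    (hdiff huC z hz) (hdiff hvC z hz), hincomp z hz, hmass z hz]
  simp

/-- The relative pseudo-volumetric mass flux is well defined: the integral
`∫_{-d}^{η x} √ρ (u − c) dy` does not depend on `x`. -/
theorem pseudo_mass_flux_well_defined
    (c L d g Patm : ℝ)
    (hc : 0 < c) (hL : 0 < L) (hd : 0 < d) (hg : 0 < g)
    (η : ℝ → ℝ) (hηC3 : ContDiff ℝ 3 η)
    (hηper : ∀ x, η (x + L) = η x)
    (hηmean : (∫ x in (-(L/2))..(L/2), η x) = 0)
    (hηbed : ∀ x, -d < η x)
    (D : Set (ℝ × ℝ)) (hDdef : D = {z : ℝ × ℝ | -d < z.2 ∧ z.2 < η z.1})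
    (u v ρ P : ℝ × ℝ → ℝ)
    (huC : ContDiffOn ℝ 2 u (closure D)) (hvC : ContDiffOn ℝ 2 v (closure D))
    (hρC : ContDiffOn ℝ 2 ρ (closure D)) (hPC : ContDiffOn ℝ 2 P (closure D))
    (huper : ∀ x y, u (x + L, y) = u (x, y)) (hvper : ∀ x y, v (x + L, y) = v (x, y))
    (hρper : ∀ x y, ρ (x + L, y) = ρ (x, y)) (hPper : ∀ x y, P (x + L, y) = P (x, y))
    (hρpos : ∀ z ∈ closure D, 0 < ρ z)
    (hincomp : ∀ z ∈ D, pdx u z + pdy v z = 0)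
    (hmass : ∀ z ∈ D, (u z - c) * pdx ρ z + v z * pdy ρ z = 0)
    (heuler1 : ∀ z ∈ D, ρ z * (u z - c) * pdx u z + ρ z * v z * pdy u z = -pdx P z)
    (heuler2 : ∀ z ∈ D, ρ z * (u z - c) * pdx v z + ρ z * v z * pdy v z = -pdy P z - g * ρ z)
    (hkin : ∀ x, v (x, η x) = (u (x, η x) - c) * deriv η x)
    (hbed : ∀ x, v (x, -d) = 0)
    (hPsurf : ∀ x, P (x, η x) = Patm)
    (hnostag : ∀ z ∈ closure D, u z < c)
    :
    ∀ x₁ x₂ : ℝ,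
      (∫ y in (-d)..(η x₁), Real.sqrt (ρ (x₁, y)) * (u (x₁, y) - c))
        = ∫ y in (-d)..(η x₂), Real.sqrt (ρ (x₂, y)) * (u (x₂, y) - c) :=
  pseudo_mass_flux_well_defined_general c d η hηC3 hηbed D hDdef u v ρ huC hvC hρC hρpos hincomp
    hmass hkin hbed
end

section
/- The difference of two solutions of the height equation lies in the kernel of the linearized operator: if (h,Q) and (h̃,Q) are two solutions of the height equation (with the same Q, the same data ρ̂, β, and d(h) = d(h̃)), then w := h − h̃ satisfies 𝓛w = 0 at every point of R, where 𝓛w := (1+h_q²)h_p⁻³ w_{pp} + h_p⁻¹ w_{qq} − 2h_q h_p⁻² w_{pq} + h_p⁻³[h̃_{qq}(h_p+h̃_p) − 2h̃_q h̃_{pq} + β(−p)(h_p² + h_p h̃_p + h̃_p²) − g ρ̂′(p)(h̃ − d(h̃))(h_p² + h_p h̃_p + h̃_p²)] w_p + h_p⁻³[h̃_{pp}(h_q + h̃_q) − 2 h_p h̃_{pq}] w_q − g ρ̂′(p) w. -/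
open Set MeasureTheory

/-- The linearized operator `𝓛` associated with two solutions `h`, `ht` of the height
equation (with `dht` the mean depth of `ht`). -/
noncomputable def heightOp (g dht : ℝ) (ρh β : ℝ → ℝ) (h ht : ℝ × ℝ → ℝ)
    (w : ℝ × ℝ → ℝ) (z : ℝ × ℝ) : ℝ :=
  (1 + (pdx h z) ^ 2) * ((pdy h z) ^ 3)⁻¹ * pdy (pdy w) z
    + (pdy h z)⁻¹ * pdx (pdx w) z
    - 2 * pdx h z * ((pdy h z) ^ 2)⁻¹ * pdy (pdx w) z
    + ((pdy h z) ^ 3)⁻¹ * (pdx (pdx ht) z * (pdy h z + pdy ht z)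
        - 2 * pdx ht z * pdy (pdx ht) z
        + β (-z.2) * ((pdy h z) ^ 2 + pdy h z * pdy ht z + (pdy ht z) ^ 2)
        - g * deriv ρh z.2 * (ht z - dht)
            * ((pdy h z) ^ 2 + pdy h z * pdy ht z + (pdy ht z) ^ 2)) * pdy w z
    + ((pdy h z) ^ 3)⁻¹ * (pdy (pdy ht) z * (pdx h z + pdx ht z)
        - 2 * pdy h z * pdy (pdx ht) z) * pdx w z
    - g * deriv ρh z.2 * w z

/-!
Subtracting the height equations of `h` and `h̃` and writing each difference of products
as a combination of differences — `a³ - b³ = (a - b)(a² + ab + b²)` for the cubes of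
`h_p`, `h̃_p`, and `ab - a'b' = a(b - b') + b'(a - a')` for the quadratic terms — expresses
`h_p³ 𝓛(h - h̃)` as the difference of the two residuals, which both vanish in `R`.
Since partial derivatives up to order two are linear on `C²` functions, this is a pointwise
algebraic identity once `h_p ≠ 0`.
-/

section FDerivSub

variable {𝕜 E F : Type*} [NontriviallyNormedField 𝕜] [NormedAddCommGroup E] [NormedSpace 𝕜 E]
  [NormedAddCommGroup F] [NormedSpace 𝕜 F] {f g : E → F} {z : E}

theorem fderiv_sub_apply (hf : DifferentiableAt 𝕜 f z) (hg : DifferentiableAt 𝕜 g z) (v : E) :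
    fderiv 𝕜 (fun x => f x - g x) z v = fderiv 𝕜 f z v - fderiv 𝕜 g z v := by
  rw [fderiv_fun_sub hf hg]
  rfl

theorem fderiv_fderiv_sub_apply (hf : ContDiffAt 𝕜 2 f z) (hg : ContDiffAt 𝕜 2 g z) (v u : E) :
    fderiv 𝕜 (fun x => fderiv 𝕜 (fun y => f y - g y) x v) z u
      = fderiv 𝕜 (fun x => fderiv 𝕜 f x v) z u - fderiv 𝕜 (fun x => fderiv 𝕜 g x v) z u := by
  have hfv : ContDiffAt 𝕜 1 (fun x => fderiv 𝕜 f x v) z :=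
    (hf.fderiv_right le_rfl).clm_apply contDiffAt_const
  have hgv : ContDiffAt 𝕜 1 (fun x => fderiv 𝕜 g x v) z :=
    (hg.fderiv_right le_rfl).clm_apply contDiffAt_const
  have hsub : (fun x => fderiv 𝕜 (fun y => f y - g y) x v)
      =ᶠ[nhds z] fun x => fderiv 𝕜 f x v - fderiv 𝕜 g x v := by
    filter_upwards [hf.eventually (by simp), hg.eventually (by simp)] with x hfx hgx
    exact fderiv_sub_apply (hfx.differentiableAt two_ne_zero) (hgx.differentiableAt two_ne_zero) v
  rw [hsub.fderiv_eq, fderiv_sub_apply (hfv.differentiableAt one_ne_zero)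
    (hgv.differentiableAt one_ne_zero)]

end FDerivSub

noncomputable def heightResidual (g d : ℝ) (ρh β : ℝ → ℝ) (h : ℝ × ℝ → ℝ) (z : ℝ × ℝ) : ℝ :=
  (1 + (pdx h z) ^ 2) * pdy (pdy h) z + pdx (pdx h) z * (pdy h z) ^ 2
      - 2 * pdx h z * pdy h z * pdy (pdx h) z
      - g * (h z - d) * (pdy h z) ^ 3 * deriv ρh z.2
    + (pdy h z) ^ 3 * β (-z.2)

theorem pdy_pow_three_mul_heightOp_sub (g d : ℝ) (ρh β : ℝ → ℝ) {h ht : ℝ × ℝ → ℝ}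
    {z : ℝ × ℝ} (hh : ContDiffAt ℝ 2 h z) (hht : ContDiffAt ℝ 2 ht z) (hhp : pdy h z ≠ 0) :
    pdy h z ^ 3 * heightOp g d ρh β h ht (fun w => h w - ht w) z
      = heightResidual g d ρh β h z - heightResidual g d ρh β ht z := by
  have hh1 := hh.differentiableAt two_ne_zero
  have hht1 := hht.differentiableAt two_ne_zero
  unfold heightOp heightResidual pdx pdy at *
  rw [fderiv_sub_apply hh1 hht1, fderiv_sub_apply hh1 hht1, fderiv_fderiv_sub_apply hh hht,
    fderiv_fderiv_sub_apply hh hht, fderiv_fderiv_sub_apply hh hht]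
  field_simp
  ring

theorem difference_in_kernel_of_linearized_operator_general
    (L p₀ g : ℝ)
    (R : Set (ℝ × ℝ)) (hRdef : R = Ioo (-(L/2)) (L/2) ×ˢ Ioo p₀ 0)
    (ρh : ℝ → ℝ)
    (β : ℝ → ℝ)
    (h : ℝ × ℝ → ℝ) (dh : ℝ)
    (hhC : ContDiffOn ℝ 3 h (closure R))
    (hhp : ∀ z ∈ closure R, 0 < pdy h z)
    (hhpde : ∀ z ∈ R,
      (1 + (pdx h z) ^ 2) * pdy (pdy h) z + pdx (pdx h) z * (pdy h z) ^ 2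
          - 2 * pdx h z * pdy h z * pdy (pdx h) z
          - g * (h z - dh) * (pdy h z) ^ 3 * deriv ρh z.2
        = -(pdy h z) ^ 3 * β (-z.2))
    (ht : ℝ × ℝ → ℝ) (dht : ℝ)
    (hhtC : ContDiffOn ℝ 3 ht (closure R))
    (hhtpde : ∀ z ∈ R,
      (1 + (pdx ht z) ^ 2) * pdy (pdy ht) z + pdx (pdx ht) z * (pdy ht z) ^ 2
          - 2 * pdx ht z * pdy ht z * pdy (pdx ht) z
          - g * (ht z - dht) * (pdy ht z) ^ 3 * deriv ρh z.2
        = -(pdy ht z) ^ 3 * β (-z.2))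
    (hdd : dh = dht) :
    ∀ z ∈ R, heightOp g dht ρh β h ht (fun w => h w - ht w) z = 0 := by
  intro z hz
  have hRopen : IsOpen R := hRdef ▸ isOpen_Ioo.prod isOpen_Ioo
  have hclosure : closure R ∈ nhds z := Filter.mem_of_superset (hRopen.mem_nhds hz) subset_closure
  have hh : ContDiffAt ℝ 2 h z := (hhC.contDiffAt hclosure).of_le (by norm_num)
  have hht : ContDiffAt ℝ 2 ht z := (hhtC.contDiffAt hclosure).of_le (by norm_num)
  have hres : heightResidual g dht ρh β h z = 0 := by
    rw [heightResidual, ← hdd, hhpde z hz]; ring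
  have hres_t : heightResidual g dht ρh β ht z = 0 := by
    rw [heightResidual, hhtpde z hz]; ring
  have hhp_ne : pdy h z ≠ 0 := (hhp z (subset_closure hz)).ne'
  have key := pdy_pow_three_mul_heightOp_sub g dht ρh β hh hht hhp_ne
  rw [hres, hres_t, sub_zero] at key
  exact (mul_eq_zero.1 key).resolve_left (pow_ne_zero 3 hhp_ne)

/-- The difference of two solutions of the height equation (with the same `Q` and the
same mean depth) lies in the kernel of the linearized operator `𝓛`. -/
theorem difference_in_kernel_of_linearized_operator
    (L p₀ g : ℝ) (hL : 0 < L) (hp₀neg : p₀ < 0) (hg : 0 < g)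
    (R : Set (ℝ × ℝ)) (hRdef : R = Ioo (-(L/2)) (L/2) ×ˢ Ioo p₀ 0)
    (ρh : ℝ → ℝ) (hρhC : ContDiffOn ℝ 2 ρh (Icc p₀ 0))
    (hρhpos : ∀ p ∈ Icc p₀ 0, 0 < ρh p)
    (hρhdec : ∀ p ∈ Icc p₀ 0, deriv ρh p ≤ 0)
    (β : ℝ → ℝ) (hβC : ContDiffOn ℝ 1 β (Icc (0 : ℝ) (|p₀|)))
    (Q : ℝ)
    (h : ℝ × ℝ → ℝ) (dh : ℝ)
    (hdhdef : dh = (1 / L) * ∫ q in (-(L/2))..(L/2), h (q, 0))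
    (hhC : ContDiffOn ℝ 3 h (closure R))
    (hhper : ∀ q p, h (q + L, p) = h (q, p))
    (hhp : ∀ z ∈ closure R, 0 < pdy h z)
    (hhpde : ∀ z ∈ R,
      (1 + (pdx h z) ^ 2) * pdy (pdy h) z + pdx (pdx h) z * (pdy h z) ^ 2
          - 2 * pdx h z * pdy h z * pdy (pdx h) z
          - g * (h z - dh) * (pdy h z) ^ 3 * deriv ρh z.2
        = -(pdy h z) ^ 3 * β (-z.2))
    (hhbot : ∀ q : ℝ, h (q, p₀) = 0)
    (hhtop : ∀ q : ℝ, 1 + (pdx h (q, 0)) ^ 2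
        + (pdy h (q, 0)) ^ 2 * (2 * g * ρh 0 * h (q, 0) - Q) = 0)
    (ht : ℝ × ℝ → ℝ) (dht : ℝ)
    (hdhtdef : dht = (1 / L) * ∫ q in (-(L/2))..(L/2), ht (q, 0))
    (hhtC : ContDiffOn ℝ 3 ht (closure R))
    (hhtper : ∀ q p, ht (q + L, p) = ht (q, p))
    (hhtp : ∀ z ∈ closure R, 0 < pdy ht z)
    (hhtpde : ∀ z ∈ R,
      (1 + (pdx ht z) ^ 2) * pdy (pdy ht) z + pdx (pdx ht) z * (pdy ht z) ^ 2
          - 2 * pdx ht z * pdy ht z * pdy (pdx ht) z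
          - g * (ht z - dht) * (pdy ht z) ^ 3 * deriv ρh z.2
        = -(pdy ht z) ^ 3 * β (-z.2))
    (hhtbot : ∀ q : ℝ, ht (q, p₀) = 0)
    (hhttop : ∀ q : ℝ, 1 + (pdx ht (q, 0)) ^ 2
        + (pdy ht (q, 0)) ^ 2 * (2 * g * ρh 0 * ht (q, 0) - Q) = 0)
    (hdd : dh = dht) :
    ∀ z ∈ R, heightOp g dht ρh β h ht (fun w => h w - ht w) z = 0 :=
  difference_in_kernel_of_linearized_operator_general L p₀ g R hRdef ρh β h dh hhC hhp hhpde ht dht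
    hhtC hhtpde hdd
end
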